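/- Let 𝒱 be a left skew-closed category which is left normal. Define a category V_*𝒱 with the same objects as 𝒱, hom-sets 𝒱(I,[A,B]), identity of A the morphism j_A, and composite of f : I → [A,B] and g : I → [B,C] the morphism i ∘ [f,1] ∘ L^A_{B,C} ∘ g : I → [A,C]. Then V_*𝒱 is indeed a category, and the left-normality bijections 𝒱(A,B) ≅ 𝒱(I,[A,B]) (sending h to [1_A,h] ∘ j_A) constitute an isomorphism of categories 𝒱 ≅ V_*𝒱. -/

import Mathlib

/-!
Write `ev x : [X,Y] ⟶ Y` for evaluation `i ∘ [x,1]` at a global element `x : I ⟶ X`, so that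
the composite in `V_*𝒱` is `g ≫ L ≫ ev f`. Evaluation is natural in `Y`, and `j_X ≫ ev x = x`
by (SCC5). The identity laws are then (SCC2) and (SCC3), and the comparison `h ↦ [1,h] ∘ j`
is functorial by naturality of `L` together with (SCC3). Associativity reduces, via (SCC1),
to the identity `L ≫ [1, ev a] ≫ ev b = ev (b ≫ ev a)`, which follows from extranaturality
of `L` and (SCC4).
-/

open CategoryTheory

universe v u w

/-- A left skew-closed category structure on a category `V` (Street, "Skew-closed categories"). -/
structure SkewClosedStruct (V : Type u) [Category.{v} V] where
  ihom : V → V → V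
  imap : ∀ {A A' B B' : V}, (A' ⟶ A) → (B ⟶ B') → (ihom A B ⟶ ihom A' B')
  imap_id : ∀ (A B : V), imap (𝟙 A) (𝟙 B) = 𝟙 (ihom A B)
  imap_comp : ∀ {A A' A'' B B' B'' : V} (f : A' ⟶ A) (f' : A'' ⟶ A') (g : B ⟶ B') (g' : B' ⟶ B''),
      imap (f' ≫ f) (g ≫ g') = imap f g ≫ imap f' g'
  unit : V
  i : ∀ A : V, ihom unit A ⟶ A
  i_natural : ∀ {A B : V} (f : A ⟶ B), imap (𝟙 unit) f ≫ i B = i A ≫ f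
  j : ∀ A : V, unit ⟶ ihom A A
  j_natural : ∀ {A B : V} (f : A ⟶ B), j A ≫ imap (𝟙 A) f = j B ≫ imap f (𝟙 B)
  L : ∀ A B C : V, ihom B C ⟶ ihom (ihom A B) (ihom A C)
  L_natural : ∀ {B B' C C' : V} (A : V) (f : B' ⟶ B) (g : C ⟶ C'),
      imap f g ≫ L A B' C' = L A B C ≫ imap (imap (𝟙 A) f) (imap (𝟙 A) g)
  L_extranatural : ∀ {A A' : V} (h : A' ⟶ A) (B C : V),
      L A B C ≫ imap (𝟙 (ihom A B)) (imap h (𝟙 C))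
        = L A' B C ≫ imap (imap h (𝟙 B)) (𝟙 (ihom A' C))
  SCC1 : ∀ A B C D : V,
      L A C D ≫ L (ihom A B) (ihom A C) (ihom A D) ≫
          imap (L A B C) (𝟙 (ihom (ihom A B) (ihom A D)))
        = L B C D ≫ imap (𝟙 (ihom B C)) (L A B D)
  SCC2 : ∀ A C : V, L A A C ≫ imap (j A) (𝟙 (ihom A C)) ≫ i (ihom A C) = 𝟙 (ihom A C)
  SCC3 : ∀ A B : V, j B ≫ L A B B = j (ihom A B)
  SCC4 : ∀ B C : V, L unit B C ≫ imap (𝟙 (ihom unit B)) (i C) = imap (i B) (𝟙 C)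
  SCC5 : j unit ≫ i unit = 𝟙 unit

/-- Composition in the underlying category `V_*𝒱`: the composite of `f : I ⟶ [A,B]`
and `g : I ⟶ [B,C]` is `i ∘ [f,1] ∘ L^A_{B,C} ∘ g : I ⟶ [A,C]`. -/
def underlyingComp {V : Type u} [Category.{v} V] (𝒱 : SkewClosedStruct V) {A B C : V}
    (f : 𝒱.unit ⟶ 𝒱.ihom A B) (g : 𝒱.unit ⟶ 𝒱.ihom B C) : 𝒱.unit ⟶ 𝒱.ihom A C :=
  g ≫ 𝒱.L A B C ≫ 𝒱.imap f (𝟙 (𝒱.ihom A C)) ≫ 𝒱.i (𝒱.ihom A C)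

/-- The left-normality comparison `𝒱(A,B) ⟶ 𝒱(I,[A,B])`, `h ↦ [1,h] ∘ j_A`. -/
def normalCmp {V : Type u} [Category.{v} V] (𝒱 : SkewClosedStruct V) {A B : V}
    (h : A ⟶ B) : 𝒱.unit ⟶ 𝒱.ihom A B :=
  𝒱.j A ≫ 𝒱.imap (𝟙 A) h

namespace SkewClosedStruct

variable {V : Type u} [Category.{v} V] (𝒱 : SkewClosedStruct V)

lemma imap_comp_imap_fst {A A' A'' B : V} (f : A' ⟶ A) (f' : A'' ⟶ A') :
    𝒱.imap f (𝟙 B) ≫ 𝒱.imap f' (𝟙 B) = 𝒱.imap (f' ≫ f) (𝟙 B) := by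
  rw [← 𝒱.imap_comp, Category.comp_id]

lemma imap_comp_imap_snd {A B B' B'' : V} (g : B ⟶ B') (g' : B' ⟶ B'') :
    𝒱.imap (𝟙 A) g ≫ 𝒱.imap (𝟙 A) g' = 𝒱.imap (𝟙 A) (g ≫ g') := by
  rw [← 𝒱.imap_comp, Category.comp_id]

lemma imap_fst_comm_imap_snd {A A' B B' : V} (f : A' ⟶ A) (g : B ⟶ B') :
    𝒱.imap f (𝟙 B) ≫ 𝒱.imap (𝟙 A') g = 𝒱.imap (𝟙 A) g ≫ 𝒱.imap f (𝟙 B') := by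
  rw [← 𝒱.imap_comp, ← 𝒱.imap_comp, Category.id_comp, Category.comp_id,
    Category.id_comp, Category.comp_id]

def ev {X : V} (x : 𝒱.unit ⟶ X) (Y : V) : 𝒱.ihom X Y ⟶ Y :=
  𝒱.imap x (𝟙 Y) ≫ 𝒱.i Y

lemma underlyingComp_eq {A B C : V} (f : 𝒱.unit ⟶ 𝒱.ihom A B) (g : 𝒱.unit ⟶ 𝒱.ihom B C) :
    underlyingComp 𝒱 f g = g ≫ 𝒱.L A B C ≫ 𝒱.ev f (𝒱.ihom A C) :=
  rfl

lemma imap_comp_ev {X : V} (x : 𝒱.unit ⟶ X) {Y Y' : V} (k : Y ⟶ Y') :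
    𝒱.imap (𝟙 X) k ≫ 𝒱.ev x Y' = 𝒱.ev x Y ≫ k := by
  simp only [ev]
  rw [← reassoc_of% 𝒱.imap_fst_comm_imap_snd, 𝒱.i_natural, Category.assoc]

lemma imap_fst_comp_ev {X X' : V} (x : 𝒱.unit ⟶ X) (h : X ⟶ X') (Y : V) :
    𝒱.imap h (𝟙 Y) ≫ 𝒱.ev x Y = 𝒱.ev (x ≫ h) Y := by
  simp only [ev]
  rw [reassoc_of% 𝒱.imap_comp_imap_fst]

lemma j_comp_ev {X : V} (x : 𝒱.unit ⟶ X) : 𝒱.j X ≫ 𝒱.ev x X = x := by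
  rw [ev, ← Category.assoc, ← 𝒱.j_natural, Category.assoc, 𝒱.i_natural, ← Category.assoc,
    𝒱.SCC5, Category.id_comp]

lemma L_comp_imap_ev_comp_ev {X Y : V} (a : 𝒱.unit ⟶ X) (b : 𝒱.unit ⟶ 𝒱.ihom X Y) (Z : V) :
    𝒱.L X Y Z ≫ 𝒱.imap (𝟙 _) (𝒱.ev a Z) ≫ 𝒱.ev b Z = 𝒱.ev (b ≫ 𝒱.ev a Y) Z := by
  rw [show 𝒱.ev a Z = 𝒱.imap a (𝟙 Z) ≫ 𝒱.i Z from rfl, ← reassoc_of% 𝒱.imap_comp_imap_snd,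
    reassoc_of% 𝒱.L_extranatural a, reassoc_of% 𝒱.imap_fst_comm_imap_snd, reassoc_of% 𝒱.SCC4,
    𝒱.imap_fst_comp_ev, 𝒱.imap_fst_comp_ev, Category.assoc]
  rfl

lemma underlyingComp_j_left {A B : V} (f : 𝒱.unit ⟶ 𝒱.ihom A B) :
    underlyingComp 𝒱 (𝒱.j A) f = f := by
  rw [underlyingComp_eq, ev, 𝒱.SCC2, Category.comp_id]

lemma underlyingComp_j_right {A B : V} (f : 𝒱.unit ⟶ 𝒱.ihom A B) :
    underlyingComp 𝒱 f (𝒱.j B) = f := by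
  rw [underlyingComp_eq, reassoc_of% 𝒱.SCC3, j_comp_ev]

lemma underlyingComp_assoc {A B C D : V} (f : 𝒱.unit ⟶ 𝒱.ihom A B)
    (g : 𝒱.unit ⟶ 𝒱.ihom B C) (h : 𝒱.unit ⟶ 𝒱.ihom C D) :
    underlyingComp 𝒱 (underlyingComp 𝒱 f g) h = underlyingComp 𝒱 f (underlyingComp 𝒱 g h) := by
  simp only [underlyingComp_eq, Category.assoc]
  rw [← reassoc_of% (𝒱.imap_comp_ev g (𝒱.L A B D)), ← reassoc_of% 𝒱.SCC1,
    reassoc_of% 𝒱.imap_fst_comp_ev, ← 𝒱.imap_comp_ev, 𝒱.L_comp_imap_ev_comp_ev, Category.assoc]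

lemma normalCmp_id (A : V) : normalCmp 𝒱 (𝟙 A) = 𝒱.j A := by
  rw [normalCmp, 𝒱.imap_id, Category.comp_id]

lemma normalCmp_comp {A B C : V} (h₁ : A ⟶ B) (h₂ : B ⟶ C) :
    normalCmp 𝒱 (h₁ ≫ h₂) = underlyingComp 𝒱 (normalCmp 𝒱 h₁) (normalCmp 𝒱 h₂) := by
  rw [underlyingComp_eq, show normalCmp 𝒱 h₂ = 𝒱.j B ≫ 𝒱.imap (𝟙 B) h₂ from rfl,
    Category.assoc, reassoc_of% (𝒱.L_natural A (𝟙 B) h₂), 𝒱.imap_id, reassoc_of% 𝒱.SCC3,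
    𝒱.imap_comp_ev, reassoc_of% 𝒱.j_comp_ev]
  simp only [normalCmp, Category.assoc, imap_comp_imap_snd]

end SkewClosedStruct

/-- (Street, "Skew-closed categories", Example 3.5.)
If `𝒱` is a left normal left skew-closed category then the data with the same objects
as `𝒱`, hom-sets `𝒱(I,[A,B])`, identities `j_A` and composition
`(f,g) ↦ i ∘ [f,1] ∘ L^A_{B,C} ∘ g` form a category `V_*𝒱`, and the left-normality
bijections `h ↦ [1,h] ∘ j_A` constitute an isomorphism of categories `𝒱 ≅ V_*𝒱`. -/
theorem underlying_category_iso {V : Type u} [Category.{v} V] (𝒱 : SkewClosedStruct V)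
    (normal : ∀ A B : V, Function.Bijective (fun h : A ⟶ B => normalCmp 𝒱 h)) :
    -- `V_*𝒱` is a category: left and right identity laws and associativity
    (∀ (A B : V) (f : 𝒱.unit ⟶ 𝒱.ihom A B), underlyingComp 𝒱 (𝒱.j A) f = f) ∧
    (∀ (A B : V) (f : 𝒱.unit ⟶ 𝒱.ihom A B), underlyingComp 𝒱 f (𝒱.j B) = f) ∧
    (∀ (A B C D : V) (f : 𝒱.unit ⟶ 𝒱.ihom A B) (g : 𝒱.unit ⟶ 𝒱.ihom B C)
        (h : 𝒱.unit ⟶ 𝒱.ihom C D),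
      underlyingComp 𝒱 (underlyingComp 𝒱 f g) h
        = underlyingComp 𝒱 f (underlyingComp 𝒱 g h)) ∧
    -- the comparison maps are functorial
    (∀ A : V, normalCmp 𝒱 (𝟙 A) = 𝒱.j A) ∧
    (∀ (A B C : V) (h₁ : A ⟶ B) (h₂ : B ⟶ C),
      normalCmp 𝒱 (h₁ ≫ h₂) = underlyingComp 𝒱 (normalCmp 𝒱 h₁) (normalCmp 𝒱 h₂)) ∧
    -- and bijective on homs, so they constitute an isomorphism of categories `𝒱 ≅ V_*𝒱`
    (∀ A B : V, Function.Bijective (fun h : A ⟶ B => normalCmp 𝒱 h)) :=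
  ⟨fun _ _ => 𝒱.underlyingComp_j_left, fun _ _ => 𝒱.underlyingComp_j_right,
    fun _ _ _ _ => 𝒱.underlyingComp_assoc, 𝒱.normalCmp_id, fun _ _ _ => 𝒱.normalCmp_comp,
    normal⟩
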